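/- arXiv:2007.11902 — 4 statements merged into one kernel-verified Lean document; each statement's English description precedes it below -/
import Mathlib

section
/- The function h₂(t) = log(exp(-max(1-t,0)) + exp(-max(1+t,0))) satisfies |h₂(t)| ≤ 1 - log 2 for all real t. -/
/-!
Write `S t = exp (-[1-t]₊) + exp (-[1+t]₊)`. Both summands lie in `(0, 1]` and their product is at
most `exp (-2)`, so `(1 - x) (1 - y) ≥ 0` gives `S t ≤ 1 + exp (-2) ≤ e / 2`. For `|t| ≤ 1` one has
`S t = exp (-1) (exp t + exp (-t)) ≥ 2 / e`, and for `|t| ≥ 1` one summand equals `1 ≥ 2 / e`.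
Taking logarithms, `log 2 - 1 ≤ log (S t) ≤ 1 - log 2`.
-/

open Real

lemma exp_neg_add_exp_neg_le_one_add {a b : ℝ} (ha : 0 ≤ a) (hb : 0 ≤ b) :
    exp (-a) + exp (-b) ≤ 1 + exp (-(a + b)) := by
  have hxa : exp (-a) ≤ 1 := exp_le_one_iff.2 (neg_nonpos.2 ha)
  have hxb : exp (-b) ≤ 1 := exp_le_one_iff.2 (neg_nonpos.2 hb)
  have hprod : exp (-(a + b)) = exp (-a) * exp (-b) := by rw [← exp_add, neg_add]
  nlinarith [mul_nonneg (sub_nonneg.2 hxa) (sub_nonneg.2 hxb)]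

lemma exp_neg_posPart_add_le (t : ℝ) :
    exp (-(max (1 - t) 0)) + exp (-(max (1 + t) 0)) ≤ 1 + exp (-2) :=
  calc _ ≤ 1 + exp (-(max (1 - t) 0 + max (1 + t) 0)) :=
        exp_neg_add_exp_neg_le_one_add (le_max_right _ _) (le_max_right _ _)
    _ ≤ 1 + exp (-2) := by
        gcongr
        linarith [le_max_left (1 - t) 0, le_max_left (1 + t) 0]

lemma two_mul_exp_neg_one_le_exp_neg_posPart_add (t : ℝ) :
    2 * exp (-1) ≤ exp (-(max (1 - t) 0)) + exp (-(max (1 + t) 0)) := by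
  have h2e : 2 * exp (-1) ≤ 1 := by
    rw [exp_neg, ← div_eq_mul_inv, div_le_one (exp_pos 1)]
    linarith [add_one_le_exp 1]
  rcases le_total 1 t with ht | ht
  · rw [max_eq_right (by linarith), neg_zero, exp_zero]
    linarith [exp_pos (-(max (1 + t) 0))]
  rcases le_total t (-1) with ht' | ht'
  · rw [max_eq_right (a := 1 + t) (by linarith), neg_zero, exp_zero]
    linarith [exp_pos (-(max (1 - t) 0))]
  rw [max_eq_left (by linarith), max_eq_left (by linarith)]
  have hsplit : exp (-(1 - t)) + exp (-(1 + t)) = exp (-1) * (exp t + exp (-t)) := by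
    rw [mul_add, ← exp_add, ← exp_add]; ring_nf
  rw [hsplit]
  have hexp_sum : 2 ≤ exp t + exp (-t) := by linarith [add_one_le_exp t, add_one_le_exp (-t)]
  nlinarith [exp_pos (-1)]

lemma one_add_exp_neg_two_le_exp_one_div_two : 1 + exp (-2) ≤ exp 1 / 2 := by
  have he : 2.7182818283 < exp 1 := exp_one_gt_d9
  have hsq : exp (-2) * (exp 1 * exp 1) = 1 := by rw [← exp_add, ← exp_add]; norm_num
  nlinarith [exp_pos (-2)]

theorem h2_bounded :
    ∀ t : ℝ,
      |Real.log (Real.exp (-(max (1 - t) 0)) + Real.exp (-(max (1 + t) 0)))| ≤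
        1 - Real.log 2 := by
  intro t
  have hlo := two_mul_exp_neg_one_le_exp_neg_posPart_add t
  have hhi := (exp_neg_posPart_add_le t).trans one_add_exp_neg_two_le_exp_one_div_two
  rw [abs_le, neg_sub]
  constructor
  · calc log 2 - 1 = log (2 * exp (-1)) := by rw [log_mul two_ne_zero (exp_ne_zero _), log_exp]; ring
      _ ≤ _ := log_le_log (by positivity) hlo
  · calc log _ ≤ log (exp 1 / 2) := log_le_log (by positivity) hhi
      _ = 1 - log 2 := by rw [log_div (exp_ne_zero _) two_ne_zero, log_exp]
end

section
/- For any p ∈ (0,1), the function h(t) = p·max(1-t,0) + (1-p)·max(1+t,0) + log(exp(-max(1-t,0)) + exp(-max(1+t,0))) is coercive in t. -/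
/-!
Write `a = [1-t]₊`, `b = [1+t]₊`. Since `log (e⁻ᵃ + e⁻ᵇ) ≥ -min a b`, we get
`h t ≥ p a + (1-p) b - min a b ≥ min p (1-p) · |a - b| ≥ min p (1-p) · |t|`,
and `min p (1-p) > 0`.
-/

open Real Filter

lemma neg_min_le_log_exp_neg_add_exp_neg (a b : ℝ) :
    -min a b ≤ log (exp (-a) + exp (-b)) := by
  have hpos := exp_pos (-a)
  have hpos' := exp_pos (-b)
  rw [le_log_iff_exp_le (by positivity)]
  rcases min_choice a b with h | h <;> rw [h] <;> linarith

lemma min_mul_abs_sub_le_mul_add_mul_sub_min (p a b : ℝ) :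
    min p (1 - p) * |a - b| ≤ p * a + (1 - p) * b - min a b := by
  rcases le_total a b with hab | hab
  · rw [min_eq_left hab, abs_of_nonpos (sub_nonpos.2 hab)]
    nlinarith [min_le_right p (1 - p)]
  · rw [min_eq_right hab, abs_of_nonneg (sub_nonneg.2 hab)]
    nlinarith [min_le_left p (1 - p)]

lemma abs_le_abs_max_one_sub_sub_max_one_add (t : ℝ) :
    |t| ≤ |max (1 - t) 0 - max (1 + t) 0| := by
  rcases le_total 0 t with ht | ht
  · rw [abs_of_nonneg ht, max_eq_left (by linarith : (0 : ℝ) ≤ 1 + t), abs_sub_comm]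
    refine le_trans ?_ (le_abs_self _)
    have : max (1 - t) 0 ≤ 1 := max_le (by linarith) zero_le_one
    linarith
  · rw [abs_of_nonpos ht, max_eq_left (by linarith : (0 : ℝ) ≤ 1 - t)]
    refine le_trans ?_ (le_abs_self _)
    have : max (1 + t) 0 ≤ 1 := max_le (by linarith) zero_le_one
    linarith

theorem h_coercive (p : ℝ) (hp : p ∈ Set.Ioo (0 : ℝ) 1) :
    Filter.Tendsto
      (fun t : ℝ =>
        p * max (1 - t) 0 + (1 - p) * max (1 + t) 0 +
          Real.log (Real.exp (-(max (1 - t) 0)) + Real.exp (-(max (1 + t) 0))))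
      (Filter.comap (fun t : ℝ => |t|) Filter.atTop) Filter.atTop := by
  have hc : 0 < min p (1 - p) := lt_min hp.1 (sub_pos.2 hp.2)
  refine tendsto_atTop_mono (fun t => ?_) (tendsto_comap.const_mul_atTop hc)
  calc min p (1 - p) * |t|
      ≤ min p (1 - p) * |max (1 - t) 0 - max (1 + t) 0| :=
        mul_le_mul_of_nonneg_left (abs_le_abs_max_one_sub_sub_max_one_add t) hc.le
    _ ≤ p * max (1 - t) 0 + (1 - p) * max (1 + t) 0 - min (max (1 - t) 0) (max (1 + t) 0) :=
        min_mul_abs_sub_le_mul_add_mul_sub_min _ _ _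
    _ ≤ _ := by linarith [neg_min_le_log_exp_neg_add_exp_neg (max (1 - t) 0) (max (1 + t) 0)]
end

section
/- Let h : ℝ → ℝ be continuous and coercive, and let a ∈ ℝⁿ be a nonzero vector. Then the function θ ↦ h(aᵀθ) on ℝⁿ is continuous, and its sublevel sets are unbounded precisely in directions orthogonal to a; in particular, if a₁,...,aₙ ∈ ℝⁿ satisfy ⋂ᵢ {θ : aᵢᵀθ = 0} = {0}, then θ ↦ Σᵢ h(aᵢᵀθ) is coercive on ℝⁿ, provided h is bounded below. -/
/-!
The linear map `θ ↦ (aᵢᵀθ)ᵢ` is injective on a finite-dimensional space, hence a closed embedding,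
so it maps the cocompact filter of `ℝⁿ` into that of `Fin n → ℝ`. By Tychonoff the latter is the
supremum over `i` of the pullbacks of `cocompact ℝ` along the `i`-th coordinate, and along each of
them the `i`-th term of `∑ i, h (vᵢ)` tends to `∞` while the remaining terms are bounded below.
-/

open Filter Topology

theorem tendsto_sum_pi_cocompact_atTop {ι : Type*} [Fintype ι] {X : ι → Type*}
    [∀ i, TopologicalSpace (X i)] {f : ∀ i, X i → ℝ}
    (hf : ∀ i, Tendsto (f i) (cocompact (X i)) atTop) (hbdd : ∀ i, BddBelow (Set.range (f i))) :
    Tendsto (fun x : ∀ i, X i => ∑ i, f i (x i)) (cocompact (∀ i, X i)) atTop := by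
  classical
  choose b hb using hbdd
  rw [← coprodᵢ_cocompact, Filter.coprodᵢ, tendsto_iSup]
  intro i
  simp_rw [← Finset.add_sum_erase _ _ (Finset.mem_univ i)]
  exact tendsto_atTop_add_right_of_le _ (∑ j ∈ Finset.univ.erase i, b j)
    ((hf i).comp tendsto_comap) fun x => Finset.sum_le_sum fun j _ => hb j ⟨x j, rfl⟩

theorem composed_coercive (n : ℕ)
    (h : ℝ → ℝ)
    (hcont : Continuous h)
    (hcoer : Filter.Tendsto h (Filter.comap (fun t : ℝ => |t|) Filter.atTop) Filter.atTop)
    (hbdd : BddBelow (Set.range h))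
    (a : Fin n → EuclideanSpace ℝ (Fin n))
    (hnull : ⋂ i, {θ : EuclideanSpace ℝ (Fin n) | ∑ j, a i j * θ j = 0} = {0}) :
    (∀ i, Continuous (fun θ : EuclideanSpace ℝ (Fin n) => h (∑ j, a i j * θ j))) ∧
      Filter.Tendsto (fun θ : EuclideanSpace ℝ (Fin n) => ∑ i, h (∑ j, a i j * θ j))
        (Filter.comap (fun θ => ‖θ‖) Filter.atTop) Filter.atTop := by
  let A : EuclideanSpace ℝ (Fin n) →ₗ[ℝ] (Fin n → ℝ) :=
    (Matrix.of fun i j => a i j).mulVecLin ∘ₗ (WithLp.linearEquiv 2 ℝ (Fin n → ℝ)).toLinearMap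
  have hA : ∀ θ i, A θ i = ∑ j, a i j * θ j := fun _ _ => rfl
  refine ⟨fun i => hcont.comp ((continuous_apply i).comp A.continuous_of_finiteDimensional), ?_⟩
  have hker : LinearMap.ker A = ⊥ := by
    refine LinearMap.ker_eq_bot'.2 fun θ hθ => ?_
    rw [← Set.mem_singleton_iff, ← hnull, Set.mem_iInter]
    exact fun i => (hA θ i).symm.trans (congrFun hθ i)
  have hcoer_cocompact : Tendsto h (cocompact ℝ) atTop := by
    rwa [comap_abs_atTop, ← cocompact_eq_atBot_atTop] at hcoer
  rw [comap_norm_atTop, Metric.cobounded_eq_cocompact]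
  exact (tendsto_sum_pi_cocompact_atTop (fun _ => hcoer_cocompact) fun _ => hbdd).comp
    (A.isClosedEmbedding_of_injective hker).tendsto_cocompact
end

section
/- Let h̃₁(θ) = [1 - a₁ᵀθ]₊ + [1 + a₂ᵀθ]₊ with a₁, a₂ ∈ ℝⁿ. If for every nonzero θ ∈ ℝⁿ either a₁ᵀθ < 0 or a₂ᵀθ > 0, then h̃₁ is coercive on ℝⁿ. -/
/-!
The two hinges dominate `g θ = max (-⟪a₁, θ⟫) ⟪a₂, θ⟫`, since `[1 - s]₊ ≥ -s`, `[1 + t]₊ ≥ t` and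
both are nonnegative. The function `g` is continuous, positively homogeneous and, by hypothesis,
positive off the origin, so its minimum `c` on the (compact) unit sphere is positive and
`g θ ≥ c ‖θ‖`.
-/

open Filter

lemma exists_pos_mul_norm_le_of_homogeneous {E : Type*} [NormedAddCommGroup E] [NormedSpace ℝ E]
    [ProperSpace E] {f : E → ℝ} (hf : Continuous f)
    (hhom : ∀ t : ℝ, 0 ≤ t → ∀ x, f (t • x) = t * f x) (hpos : ∀ x, x ≠ 0 → 0 < f x) :
    ∃ c, 0 < c ∧ ∀ x, c * ‖x‖ ≤ f x := by
  obtain ⟨c, hc, hsphere⟩ := (isCompact_sphere (0 : E) 1).exists_forall_le' hf.continuousOn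
    fun u hu => hpos u (ne_zero_of_mem_unit_sphere ⟨u, hu⟩)
  refine ⟨c, hc, fun x => ?_⟩
  rcases eq_or_ne x 0 with rfl | hx
  · simp [show f 0 = 0 by simpa using hhom 0 le_rfl 0]
  · have hu : ‖x‖⁻¹ • x ∈ Metric.sphere (0 : E) 1 := by
      simp [norm_smul, hx]
    calc c * ‖x‖ ≤ f (‖x‖⁻¹ • x) * ‖x‖ := by gcongr; exact hsphere _ hu
      _ = f x := by
        rw [hhom _ (by positivity), mul_comm, ← mul_assoc, mul_inv_cancel₀ (norm_ne_zero_iff.2 hx),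
          one_mul]

lemma max_neg_le_hinge_add_hinge (s t : ℝ) : max (-s) t ≤ max (1 - s) 0 + max (1 + t) 0 := by
  apply max_le
  · linarith [le_max_left (1 - s) 0, le_max_right (1 + t) 0]
  · linarith [le_max_right (1 - s) 0, le_max_left (1 + t) 0]

theorem htilde1_coercive (n : ℕ) (a₁ a₂ : EuclideanSpace ℝ (Fin n))
    (hcond : ∀ θ : EuclideanSpace ℝ (Fin n), θ ≠ 0 →
      (∑ j, a₁ j * θ j) < 0 ∨ 0 < ∑ j, a₂ j * θ j) :
    Filter.Tendsto
      (fun θ : EuclideanSpace ℝ (Fin n) =>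
        max (1 - ∑ j, a₁ j * θ j) 0 + max (1 + ∑ j, a₂ j * θ j) 0)
      (Filter.comap (fun θ => ‖θ‖) Filter.atTop) Filter.atTop := by
  have hinner (a θ : EuclideanSpace ℝ (Fin n)) : ∑ j, a j * θ j = inner ℝ a θ := by
    simp [PiLp.inner_apply, mul_comm]
  simp only [hinner] at hcond ⊢
  obtain ⟨c, hc, hbound⟩ := exists_pos_mul_norm_le_of_homogeneous
    (f := fun θ => max (-inner ℝ a₁ θ) (inner ℝ a₂ θ)) (by fun_prop)
    (fun t ht θ => by simp only [real_inner_smul_right, ← mul_neg, mul_max_of_nonneg _ _ ht])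
    (fun θ hθ => by rcases hcond θ hθ with h | h <;> simp [h])
  exact tendsto_atTop_mono (fun θ => (hbound θ).trans (max_neg_le_hinge_add_hinge _ _))
    (tendsto_comap.const_mul_atTop hc)
end
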